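/- arXiv:0812.1043 — 3 statements merged into one kernel-verified Lean document; each statement's English description precedes it below -/
import Mathlib

section
/- Let f and g be polynomials in C[x1,x2] of positive degrees l and m respectively. If there are more than l·m points of C^2 at which both f and g vanish, then f and g have a common (non-constant) factor. -/
/-!
Let `N = #S` and let `V k` be the space of polynomials of total degree at most `k`, of dimension
`(k + 1) (k + 2) / 2`. The products `a f + b g` with `a ∈ V (N + m)`, `b ∈ V (N + l)` span a subspace
of `V (N + l + m)` on which evaluation at the `N` points of `S` vanishes; as Lagrange interpolation
makes this evaluation surjective on `V (N + l + m)`, the subspace has codimension at least `N`.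
If `f` and `g` are coprime, `a f = b g` forces `a = c g`, `b = c f` with `c ∈ V N`, so the
subspace has dimension at least `dim V (N + m) + dim V (N + l) - dim V N`. Comparing the two
bounds gives `N ≤ dim V (N + l + m) + dim V N - dim V (N + m) - dim V (N + l) = l m`.
-/

open Finset Module MvPolynomial

theorem Submodule.finrank_add_finrank_le_of_le_ker {K M W : Type*} [DivisionRing K]
    [AddCommGroup M] [Module K M] [AddCommGroup W] [Module K W] {E : M →ₗ[K] W}
    {U V : Submodule K M} [FiniteDimensional K V] (hUV : U ≤ V) (hUE : U ≤ LinearMap.ker E)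
    (hV : V.map E = ⊤) : finrank K U + finrank K W ≤ finrank K V := by
  have hrange : finrank K (LinearMap.range (E.domRestrict V)) = finrank K W := by
    rw [LinearMap.range_domRestrict, hV, finrank_top]
  have hker : finrank K U ≤ finrank K (LinearMap.ker (E.domRestrict V)) := by
    rw [LinearMap.ker_domRestrict, ← (Submodule.comapSubtypeEquivOfLe hUV).finrank_eq]
    exact Submodule.finrank_mono (Submodule.comap_mono hUE)
  have := LinearMap.finrank_range_add_finrank_ker (E.domRestrict V)
  omega

namespace MvPolynomial

section Dimension

variable {σ : Type*} [Fintype σ]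

theorem nat_card_setOf_sum_le (k : ℕ) :
    Nat.card {n : σ →₀ ℕ | (n.sum fun _ e => e) ≤ k} =
      (k + Fintype.card σ).choose (Fintype.card σ) := by
  classical
  have hset : {n : σ →₀ ℕ | (n.sum fun _ e => e) ≤ k} =
      ↑((range (k + 1)).biUnion fun j => (univ : Finset σ).finsuppAntidiag j) := by
    ext n
    simp [Finsupp.sum_fintype]
  rw [hset, Nat.card_coe_set_eq, Set.ncard_coe_finset, card_biUnion]
  · simp_rw [card_finsuppAntidiag_nat_eq_multichoose, card_univ]
    exact Nat.sum_range_multichoose k _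
  · intro i _ j _ hij
    exact disjoint_left.2 fun n hi hj =>
      hij ((mem_finsuppAntidiag'.1 hi).1.symm.trans (mem_finsuppAntidiag'.1 hj).1)

theorem finrank_restrictTotalDegree (R : Type*) [CommRing R] [Nontrivial R] (k : ℕ) :
    finrank R (restrictTotalDegree σ R k) = (k + Fintype.card σ).choose (Fintype.card σ) :=
  (finrank_eq_nat_card_basis (basisRestrictSupport R _)).trans (nat_card_setOf_sum_le k)

theorem finrank_restrictTotalDegree_fin_two_add_add (R : Type*) [CommRing R] [Nontrivial R]
    (n a b : ℕ) :
    finrank R (restrictTotalDegree (Fin 2) R (n + a + b)) +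
        finrank R (restrictTotalDegree (Fin 2) R n) =
      finrank R (restrictTotalDegree (Fin 2) R (n + a)) +
        finrank R (restrictTotalDegree (Fin 2) R (n + b)) + a * b := by
  have key (k : ℕ) : finrank R (restrictTotalDegree (Fin 2) R k) * 2 = (k + 2) * (k + 1) := by
    have hchoose := Nat.add_one_mul_choose_eq (k + 1) 1
    rw [Nat.choose_one_right] at hchoose
    rw [finrank_restrictTotalDegree, Fintype.card_fin]
    linarith
  linarith [key (n + a + b), key n, key (n + a), key (n + b)]

end Dimension

section CommSemiring

variable {K σ : Type*} [CommSemiring K]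

noncomputable def evalOn (S : Finset (σ → K)) : MvPolynomial σ K →ₗ[K] S → K :=
  LinearMap.pi fun s => (LinearMap.proj (s : σ → K)).comp (evalₗ K σ)

@[simp]
theorem evalOn_apply (S : Finset (σ → K)) (p : MvPolynomial σ K) (s : S) :
    evalOn S p s = eval (s : σ → K) p :=
  rfl

theorem map_mulRight_le_ker_evalOn {S : Finset (σ → K)} {f : MvPolynomial σ K}
    (hf : ∀ x ∈ S, eval x f = 0) (W : Submodule K (MvPolynomial σ K)) :
    W.map (LinearMap.mulRight K f) ≤ LinearMap.ker (evalOn S) := by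
  rintro _ ⟨p, -, rfl⟩
  ext s
  simp [hf s s.2]

theorem map_mulRight_restrictTotalDegree_le (f : MvPolynomial σ K) (n : ℕ) :
    (restrictTotalDegree σ K n).map (LinearMap.mulRight K f) ≤
      restrictTotalDegree σ K (n + f.totalDegree) := by
  rintro _ ⟨p, hp, rfl⟩
  rw [SetLike.mem_coe, mem_restrictTotalDegree] at hp
  rw [LinearMap.mulRight_apply, mem_restrictTotalDegree]
  exact (totalDegree_mul p f).trans (by omega)

end CommSemiring

section Field

variable {K σ : Type*} [Field K]

theorem exists_mem_restrictTotalDegree_evalOn_eq_basisFun (S : Finset (σ → K)) (s : S) :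
    ∃ p ∈ restrictTotalDegree σ K (#S - 1), evalOn S p = Pi.basisFun K S s := by
  classical
  choose i hi using fun t : S.erase s => Function.ne_iff.1 (ne_of_mem_erase t.2)
  set ℓ : S.erase s → MvPolynomial σ K :=
    fun t => (s.1 (i t) - t.1 (i t))⁻¹ • (X (i t) - C (t.1 (i t)))
  have hℓ_deg (t) : (ℓ t).totalDegree ≤ 1 :=
    ((totalDegree_smul_le _ _).trans (totalDegree_sub_C_le _ _)).trans (totalDegree_X _).le
  have hℓ_eval (t : S.erase s) (x : σ → K) :
      eval x (ℓ t) = (s.1 (i t) - t.1 (i t))⁻¹ * (x (i t) - t.1 (i t)) := by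
    simp [ℓ, smul_eval]
  refine ⟨∏ t, ℓ t, ?_, ?_⟩
  · rw [mem_restrictTotalDegree]
    calc _ ≤ ∑ t, (ℓ t).totalDegree := totalDegree_finsetProd _ _
      _ ≤ ∑ _t : S.erase s, 1 := sum_le_sum fun t _ => hℓ_deg t
      _ = #S - 1 := by simp [card_erase_of_mem s.2]
  · ext t
    rw [evalOn_apply, map_prod, Pi.basisFun_apply]
    by_cases hts : t = s
    · subst hts
      rw [Pi.single_eq_same]
      exact prod_eq_one fun u _ => by rw [hℓ_eval, inv_mul_cancel₀ (sub_ne_zero.2 (hi u).symm)]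
    · rw [Pi.single_eq_of_ne hts]
      exact prod_eq_zero (mem_univ ⟨t, mem_erase.2 ⟨fun h => hts (Subtype.ext h), t.2⟩⟩)
        (by rw [hℓ_eval, sub_self, mul_zero])

theorem map_evalOn_restrictTotalDegree_eq_top {S : Finset (σ → K)} {n : ℕ} (hS : #S ≤ n + 1) :
    (restrictTotalDegree σ K n).map (evalOn S) = ⊤ := by
  rw [eq_top_iff, ← (Pi.basisFun K S).span_eq, Submodule.span_le]
  rintro _ ⟨s, rfl⟩
  obtain ⟨p, hp, hps⟩ := exists_mem_restrictTotalDegree_evalOn_eq_basisFun S s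
  rw [mem_restrictTotalDegree] at hp
  exact ⟨p, (mem_restrictTotalDegree _ _ _).2 (hp.trans (by omega)), hps⟩

theorem isUnit_of_totalDegree_eq_zero {p : MvPolynomial σ K} (hp : p ≠ 0)
    (hdeg : p.totalDegree = 0) : IsUnit p := by
  refine isUnit_iff_totalDegree_of_isReduced.2 ⟨isUnit_iff_ne_zero.2 fun h0 => hp ?_, hdeg⟩
  rw [totalDegree_eq_zero_iff_eq_C.1 hdeg, h0, map_zero]

theorem map_mulRight_inf_map_mulRight_le {f g : MvPolynomial σ K} (hg : g ≠ 0)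
    (hfg : IsRelPrime f g) (n k : ℕ) :
    (restrictTotalDegree σ K (n + g.totalDegree)).map (LinearMap.mulRight K f) ⊓
        (restrictTotalDegree σ K k).map (LinearMap.mulRight K g) ≤
      (restrictTotalDegree σ K n).map (LinearMap.mulRight K (f * g)) := by
  rintro _ ⟨⟨a, ha, rfl⟩, b, -, hab⟩
  rw [LinearMap.mulRight_apply, LinearMap.mulRight_apply] at hab
  obtain ⟨c, rfl⟩ : g ∣ a := hfg.symm.dvd_of_dvd_mul_right ⟨b, by rw [← hab, mul_comm]⟩
  refine ⟨c, ?_, by rw [LinearMap.mulRight_apply, LinearMap.mulRight_apply]; ring⟩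
  rw [SetLike.mem_coe, mem_restrictTotalDegree] at ha ⊢
  rcases eq_or_ne c 0 with rfl | hc
  · simp
  · rw [totalDegree_mul_of_isDomain hg hc] at ha
    omega

theorem card_le_totalDegree_mul_of_isRelPrime
    {f g : MvPolynomial (Fin 2) K} (hf : f ≠ 0) (hg : g ≠ 0) (hfg : IsRelPrime f g)
    (S : Finset (Fin 2 → K)) (hS : ∀ x ∈ S, eval x f = 0 ∧ eval x g = 0) :
    #S ≤ f.totalDegree * g.totalDegree := by
  set N := #S
  set l := f.totalDegree
  set m := g.totalDegree
  set V := restrictTotalDegree (Fin 2) K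
  set A := (V (N + m)).map (LinearMap.mulRight K f)
  set B := (V (N + l)).map (LinearMap.mulRight K g)
  have hA : finrank K A = finrank K (V (N + m)) :=
    (Submodule.equivMapOfInjective _ (mul_left_injective₀ hf) _).finrank_eq.symm
  have hB : finrank K B = finrank K (V (N + l)) :=
    (Submodule.equivMapOfInjective _ (mul_left_injective₀ hg) _).finrank_eq.symm
  have hinf : finrank K ↥(A ⊓ B) ≤ finrank K (V N) :=
    (Submodule.finrank_mono (map_mulRight_inf_map_mulRight_le hg hfg N _)).trans
      (Submodule.finrank_map_le _ _)
  have hsup : finrank K ↥(A ⊔ B) + N ≤ finrank K (V (N + l + m)) := by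
    have hAV : A ≤ V (N + l + m) := by
      rw [add_right_comm]
      exact map_mulRight_restrictTotalDegree_le f _
    have hBV : B ≤ V (N + l + m) := map_mulRight_restrictTotalDegree_le g _
    simpa using Submodule.finrank_add_finrank_le_of_le_ker (sup_le hAV hBV)
      (sup_le (map_mulRight_le_ker_evalOn (fun x hx => (hS x hx).1) _)
        (map_mulRight_le_ker_evalOn (fun x hx => (hS x hx).2) _))
      (map_evalOn_restrictTotalDegree_eq_top (by omega))
  have hsup_inf := Submodule.finrank_sup_add_finrank_inf_eq A B
  have hdim : finrank K (V (N + l + m)) + finrank K (V N) =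
      finrank K (V (N + l)) + finrank K (V (N + m)) + l * m :=
    finrank_restrictTotalDegree_fin_two_add_add K N l m
  omega

end Field

end MvPolynomial

/-- **Bezout's theorem.** If `f, g ∈ ℂ[x₁,x₂]` have positive total degrees `l` and `m`
and vanish simultaneously at more than `l·m` points of `ℂ²`, then they have a common
non-constant factor. -/
theorem bezout_points (f g : MvPolynomial (Fin 2) ℂ) (l m : ℕ)
    (hf : f.totalDegree = l) (hg : g.totalDegree = m) (hl : 0 < l) (hm : 0 < m)
    (S : Finset (Fin 2 → ℂ)) (hScard : l * m < S.card)
    (hS : ∀ x ∈ S, eval x f = 0 ∧ eval x g = 0) :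
    ∃ h : MvPolynomial (Fin 2) ℂ, 0 < h.totalDegree ∧ h ∣ f ∧ h ∣ g := by
  by_contra! hcon
  have hf0 : f ≠ 0 := by
    rintro rfl
    rw [totalDegree_zero] at hf
    omega
  have hg0 : g ≠ 0 := by
    rintro rfl
    rw [totalDegree_zero] at hg
    omega
  have hfg : IsRelPrime f g := fun h hhf hhg =>
    isUnit_of_totalDegree_eq_zero (ne_zero_of_dvd_ne_zero hf0 hhf)
      (Nat.eq_zero_of_not_pos fun hpos => hcon h hpos hhf hhg)
  have := card_le_totalDegree_mul_of_isRelPrime hf0 hg0 hfg S hS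
  rw [hf, hg] at this
  omega
end

section
/- Let p ∈ R[x1,x2,x3] and let a be a regular point of the zero set S of p. If three distinct lines contained in S all pass through a, then a is a flat point of S: every component of the algebraic second fundamental form II(p) vanishes at a. -/
open MvPolynomial

/-- The gradient `∇p` of a polynomial on `ℝ³`. -/
noncomputable def pgrad (p : MvPolynomial (Fin 3) ℝ) : Fin 3 → MvPolynomial (Fin 3) ℝ :=
  fun i => pderiv i p

/-- Cross product of two triples of polynomials. -/
noncomputable def pcross (u v : Fin 3 → MvPolynomial (Fin 3) ℝ) :
    Fin 3 → MvPolynomial (Fin 3) ℝ :=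
  ![u 1 * v 2 - u 2 * v 1, u 2 * v 0 - u 0 * v 2, u 0 * v 1 - u 1 * v 0]

/-- Directional derivative `∇_w f = w · ∇f` along a polynomial vector field `w`. -/
noncomputable def dirDeriv (w : Fin 3 → MvPolynomial (Fin 3) ℝ)
    (f : MvPolynomial (Fin 3) ℝ) : MvPolynomial (Fin 3) ℝ :=
  ∑ i : Fin 3, w i * pderiv i f

/-- The standard basis vector `e_j`, as a constant polynomial vector field. -/
noncomputable def stdVec (j : Fin 3) : Fin 3 → MvPolynomial (Fin 3) ℝ :=
  fun i => if i = j then 1 else 0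

/-- The algebraic second fundamental form
`II(p) = { (∇_{∇p × e_j} ∇p) × ∇p }_{j=1,2,3}`; for each `j`, `IIform p j` is a
triple of polynomials, giving nine polynomial components in all. -/
noncomputable def IIform (p : MvPolynomial (Fin 3) ℝ) (j : Fin 3) :
    Fin 3 → MvPolynomial (Fin 3) ℝ :=
  pcross (fun i => dirDeriv (pcross (pgrad p) (stdVec j)) (pgrad p i)) (pgrad p)

/-!
Differentiating `p` once and twice along each line at `a` shows that every direction `v k` is
tangent, `∇p(a) ⬝ v k = 0`, and isotropic for the Hessian `H` of `p` at `a`. Three pairwise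
non-parallel isotropic vectors in the plane `∇p(a)ᗮ` force the symmetric form `H` to vanish on
that plane: writing `v₂ = α v₀ + β v₁` with `α β ≠ 0` gives `2 α β H(v₀, v₁) = 0`. Hence for
`w ⊥ ∇p(a)` the vector `H w` is orthogonal to `∇p(a)ᗮ`, i.e. parallel to `∇p(a)`, and
`(H w) × ∇p(a) = 0`; with `w = ∇p(a) × e_j` this is the vanishing of `II(p)` at `a`.
-/

open Matrix Module Submodule

theorem MvPolynomial.pderiv_pderiv_comm {R σ : Type*} [CommRing R] (i j : σ)
    (f : MvPolynomial σ R) : pderiv i (pderiv j f) = pderiv j (pderiv i f) := by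
  classical
  have : ⁅pderiv i, pderiv j⁆ = (0 : Derivation R (MvPolynomial σ R) (MvPolynomial σ R)) :=
    derivation_ext fun k => by
      rw [Derivation.commutator_apply, pderiv_X, pderiv_X]
      simp [Pi.single_apply, apply_ite]
  simpa [Derivation.commutator_apply, sub_eq_zero] using congr($this f)

section dirDeriv

variable (w : Fin 3 → MvPolynomial (Fin 3) ℝ)

theorem dirDeriv_C (r : ℝ) : dirDeriv w (C r) = 0 := by
  simp [dirDeriv]

theorem dirDeriv_add (f g : MvPolynomial (Fin 3) ℝ) :
    dirDeriv w (f + g) = dirDeriv w f + dirDeriv w g := by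
  simp [dirDeriv, mul_add, Finset.sum_add_distrib]

theorem dirDeriv_mul (f g : MvPolynomial (Fin 3) ℝ) :
    dirDeriv w (f * g) = dirDeriv w f * g + f * dirDeriv w g := by
  simp only [dirDeriv, pderiv_mul, Finset.sum_mul, Finset.mul_sum, ← Finset.sum_add_distrib]
  exact Finset.sum_congr rfl fun i _ => by ring

theorem dirDeriv_X (i : Fin 3) : dirDeriv w (X i) = w i := by
  classical
  simp [dirDeriv, pderiv_X, Pi.single_apply]

end dirDeriv

theorem hasDerivAt_eval_line (q : MvPolynomial (Fin 3) ℝ) (a v : Fin 3 → ℝ) (t : ℝ) :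
    HasDerivAt (fun t : ℝ => eval (a + t • v) q)
      (eval (a + t • v) (dirDeriv (fun i => C (v i)) q)) t := by
  induction q using MvPolynomial.induction_on with
  | C r => simpa [dirDeriv_C] using hasDerivAt_const t r
  | add f g hf hg => simpa [dirDeriv_add] using hf.fun_add hg
  | mul_X f i hf =>
    have hXi : HasDerivAt (fun t : ℝ => a i + t * v i) (v i) t := by
      simpa using ((hasDerivAt_id t).mul_const (v i)).const_add (a i)
    simpa [dirDeriv_mul, dirDeriv_X] using hf.fun_mul hXi

theorem eval_line_dirDeriv_eq_zero {q : MvPolynomial (Fin 3) ℝ} {a v : Fin 3 → ℝ}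
    (hq : ∀ t : ℝ, eval (a + t • v) q = 0) (t : ℝ) :
    eval (a + t • v) (dirDeriv (fun i => C (v i)) q) = 0 := by
  have h := hasDerivAt_eval_line q a v t
  simp only [hq] at h
  exact h.unique (hasDerivAt_const t 0)

noncomputable def hessianAt {σ R : Type*} [CommSemiring R] (p : MvPolynomial σ R) (x : σ → R) :
    Matrix σ σ R :=
  Matrix.of fun i j => eval x (pderiv i (pderiv j p))

theorem hessianAt_isSymm {σ R : Type*} [CommRing R] (p : MvPolynomial σ R) (x : σ → R) :
    (hessianAt p x).IsSymm :=
  Matrix.IsSymm.ext fun i j => by simp [hessianAt, pderiv_pderiv_comm]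

theorem eval_dirDeriv (x : Fin 3 → ℝ) (w : Fin 3 → MvPolynomial (Fin 3) ℝ)
    (q : MvPolynomial (Fin 3) ℝ) :
    eval x (dirDeriv w q) = (fun i => eval x (w i)) ⬝ᵥ fun i => eval x (pderiv i q) := by
  simp [dirDeriv, dotProduct]

theorem eval_dirDeriv_const (v x : Fin 3 → ℝ) (q : MvPolynomial (Fin 3) ℝ) :
    eval x (dirDeriv (fun i => C (v i)) q) = (fun i => eval x (pgrad q i)) ⬝ᵥ v := by
  simp [dirDeriv, pgrad, dotProduct, mul_comm]

theorem eval_dirDeriv_dirDeriv_const (v x : Fin 3 → ℝ) (q : MvPolynomial (Fin 3) ℝ) :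
    eval x (dirDeriv (fun i => C (v i)) (dirDeriv (fun i => C (v i)) q)) =
      v ⬝ᵥ hessianAt q x *ᵥ v := by
  simp only [dirDeriv, map_sum, pderiv_C_mul, map_mul, eval_C, Finset.mul_sum, hessianAt,
    dotProduct, mulVec, of_apply]
  exact Finset.sum_congr rfl fun _ _ => Finset.sum_congr rfl fun _ _ => by ring

theorem eval_stdVec (x : Fin 3 → ℝ) (j : Fin 3) :
    (fun i => eval x (stdVec j i)) = Pi.single j 1 := by
  ext i
  simp [stdVec, Pi.single_apply, apply_ite]

theorem eval_pcross (x : Fin 3 → ℝ) (u w : Fin 3 → MvPolynomial (Fin 3) ℝ) :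
    (fun i => eval x (pcross u w i)) = (fun i => eval x (u i)) ⨯₃ fun i => eval x (w i) := by
  ext i; fin_cases i <;> simp [pcross, cross_apply]

theorem eval_IIform (p : MvPolynomial (Fin 3) ℝ) (x : Fin 3 → ℝ) (j : Fin 3) :
    (fun i => eval x (IIform p j i)) =
      (hessianAt p x *ᵥ ((fun i => eval x (pgrad p i)) ⨯₃ Pi.single j 1)) ⨯₃
        fun i => eval x (pgrad p i) := by
  rw [IIform, eval_pcross]
  congr 2
  ext i
  rw [eval_dirDeriv, eval_pcross, eval_stdVec, mulVec, dotProduct_comm]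
  congr 1
  ext m
  simp [hessianAt, pgrad, pderiv_pderiv_comm i]

theorem cross_eq_zero_of_forall_dotProduct_eq_zero {R : Type*} [CommRing R] [LinearOrder R]
    [IsStrictOrderedRing R] {x g : Fin 3 → R} (h : ∀ u, g ⬝ᵥ u = 0 → x ⬝ᵥ u = 0) :
    x ⨯₃ g = 0 := by
  -- `u = g × (x × g)` is orthogonal to `g`, and `x ⬝ u = |x × g|²` by the triple product.
  have := h (g ⨯₃ (x ⨯₃ g)) (dot_self_cross _ _)
  rw [triple_product_permutation, triple_product_permutation] at this
  exact dotProduct_self_eq_zero.mp this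

theorem span_pair_eq_ker {K V : Type*} [Field K] [AddCommGroup V] [Module K V]
    [FiniteDimensional K V] (hV : finrank K V = 3) {f : Dual K V} (hf : f ≠ 0) {v₀ v₁ : V}
    (hv : LinearIndependent K ![v₀, v₁]) (h₀ : f v₀ = 0) (h₁ : f v₁ = 0) :
    span K {v₀, v₁} = LinearMap.ker f := by
  refine eq_of_le_of_finrank_eq (span_le.mpr ?_) ?_
  · rintro _ (rfl | rfl | _) <;> assumption
  · have := Dual.finrank_ker_add_one_of_ne_zero hf
    rw [← range_cons_cons_empty v₀ v₁ ![], finrank_span_eq_card hv]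
    simp only [Fintype.card_fin]
    omega

namespace LinearMap.BilinForm

variable {K V : Type*} [Field K] [AddCommGroup V] [Module K V] {B : LinearMap.BilinForm K V}

theorem IsSymm.apply_eq_zero_of_isotropic [NeZero (2 : K)] (hB : B.IsSymm) {v₀ v₁ : V}
    {a b : K} (ha : a ≠ 0) (hb : b ≠ 0) (h₀ : B v₀ v₀ = 0) (h₁ : B v₁ v₁ = 0)
    (h₂ : B (a • v₀ + b • v₁) (a • v₀ + b • v₁) = 0) {u w : V}
    (hu : u ∈ span K {v₀, v₁}) (hw : w ∈ span K {v₀, v₁}) : B u w = 0 := by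
  have h₀₁ : B v₀ v₁ = 0 := by
    simp only [map_add, map_smul, LinearMap.add_apply, LinearMap.smul_apply, smul_eq_mul, h₀, h₁,
      hB.eq v₁ v₀] at h₂
    have : (2 * a * b) * B v₀ v₁ = 0 := by linear_combination h₂
    simpa [ha, hb, NeZero.ne] using this
  obtain ⟨c, d, rfl⟩ := mem_span_pair.mp hu
  obtain ⟨e, f, rfl⟩ := mem_span_pair.mp hw
  simp [h₀, h₁, h₀₁, hB.eq v₁ v₀]

theorem IsSymm.apply_eq_zero_of_three_isotropic_lines [NeZero (2 : K)] [FiniteDimensional K V]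
    (hV : finrank K V = 3) (hB : B.IsSymm) {f : Dual K V} (hf : f ≠ 0) (v : Fin 3 → V)
    (hdistinct : ∀ k k' : Fin 3, k ≠ k' → ∀ c : K, v k ≠ c • v k')
    (hker : ∀ k, f (v k) = 0) (hiso : ∀ k, B (v k) (v k) = 0) {u w : V}
    (hu : f u = 0) (hw : f w = 0) : B u w = 0 := by
  have hv₀ : v 0 ≠ 0 := by simpa using hdistinct 0 1 (by decide) 0
  have hind : LinearIndependent K ![v 0, v 1] :=
    (LinearIndependent.pair_iff' hv₀).mpr fun c h => hdistinct 1 0 (by decide) c h.symm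
  have hspan := span_pair_eq_ker hV hf hind (hker 0) (hker 1)
  obtain ⟨a, b, hab⟩ := mem_span_pair.mp (hspan ▸ hker 2 : v 2 ∈ span K {v 0, v 1})
  have ha : a ≠ 0 := by
    rintro rfl
    exact hdistinct 2 1 (by decide) b (by simpa using hab.symm)
  have hb : b ≠ 0 := by
    rintro rfl
    exact hdistinct 2 0 (by decide) a (by simpa using hab.symm)
  exact hB.apply_eq_zero_of_isotropic ha hb (hiso 0) (hiso 1) (hab ▸ hiso 2)
    (hspan ▸ hu) (hspan ▸ hw)

end LinearMap.BilinForm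

theorem flat_point_of_three_lines_general (p : MvPolynomial (Fin 3) ℝ) (a : Fin 3 → ℝ)
    (hreg : ¬ ∀ i : Fin 3, eval a (pderiv i p) = 0)
    (v : Fin 3 → (Fin 3 → ℝ))
    (hdistinct : ∀ k k' : Fin 3, k ≠ k' → ∀ c : ℝ, v k ≠ c • v k')
    (hlines : ∀ k : Fin 3, ∀ t : ℝ, eval (a + t • v k) p = 0) :
    ∀ j i : Fin 3, eval a (IIform p j i) = 0 := by
  set g : Fin 3 → ℝ := fun i => eval a (pgrad p i)
  set B := toBilin' (hessianAt p a)
  have hg : dotProductEquiv ℝ (Fin 3) g ≠ 0 :=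
    (LinearEquiv.map_ne_zero_iff _).mpr fun h => hreg fun i => congrFun h i
  have htangent (k : Fin 3) : dotProductEquiv ℝ (Fin 3) g (v k) = 0 := by
    simpa [eval_dirDeriv_const] using eval_line_dirDeriv_eq_zero (hlines k) 0
  have hisotropic (k : Fin 3) : B (v k) (v k) = 0 := by
    simpa [B, toBilin'_apply', eval_dirDeriv_dirDeriv_const] using
      eval_line_dirDeriv_eq_zero (eval_line_dirDeriv_eq_zero (hlines k)) 0
  have hB : B.IsSymm := isSymm_toBilin'_iff_isSymm.mpr (hessianAt_isSymm p a)
  intro j i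
  have hflat : (hessianAt p a *ᵥ (g ⨯₃ Pi.single j 1)) ⨯₃ g = 0 := by
    refine cross_eq_zero_of_forall_dotProduct_eq_zero fun u hu => ?_
    rw [dotProduct_comm, ← toBilin'_apply']
    exact hB.apply_eq_zero_of_three_isotropic_lines (finrank_fin_fun ℝ) hg v hdistinct
      htangent hisotropic hu (dot_self_cross _ _)
  rw [congrFun (eval_IIform p a j) i, hflat, Pi.zero_apply]

/-- If `a` is a regular point (`∇p(a) ≠ 0`) of the zero set `S` of `p` and three
distinct lines contained in `S` pass through `a`, then `a` is a flat point:
every component of the algebraic second fundamental form `II(p)` vanishes at `a`. -/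
theorem flat_point_of_three_lines (p : MvPolynomial (Fin 3) ℝ) (a : Fin 3 → ℝ)
    (hreg : ¬ ∀ i : Fin 3, eval a (pderiv i p) = 0)
    (v : Fin 3 → (Fin 3 → ℝ))
    (hv : ∀ k : Fin 3, v k ≠ 0)
    (hdistinct : ∀ k k' : Fin 3, k ≠ k' → ∀ c : ℝ, v k ≠ c • v k')
    (hlines : ∀ k : Fin 3, ∀ t : ℝ, eval (a + t • v k) p = 0) :
    ∀ j i : Fin 3, eval a (IIform p j i) = 0 :=
  flat_point_of_three_lines_general p a hreg v hdistinct hlines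
end

section
/- Any set of N lines in R^3 determines at most C·N^{3/2} joints, for a universal constant C. -/
open MvPolynomial

/-- A line in `ℝ³`: the image of an affine map `t ↦ a + t • v` with direction `v ≠ 0`. -/
def IsLine (ℓ : Set (Fin 3 → ℝ)) : Prop :=
  ∃ a v : Fin 3 → ℝ, v ≠ 0 ∧ ℓ = {x | ∃ t : ℝ, x = a + t • v}

/-- `x` is a joint of the family `L` of lines: three lines of `L` with linearly
independent direction vectors pass through `x`. -/
def IsJoint (L : Finset (Set (Fin 3 → ℝ))) (x : Fin 3 → ℝ) : Prop :=
  ∃ ℓ₁ ∈ L, ∃ ℓ₂ ∈ L, ∃ ℓ₃ ∈ L, ∃ v₁ v₂ v₃ : Fin 3 → ℝ,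
    LinearIndependent ℝ ![v₁, v₂, v₃] ∧
    (∀ t : ℝ, x + t • v₁ ∈ ℓ₁) ∧ (∀ t : ℝ, x + t • v₂ ∈ ℓ₂) ∧ (∀ t : ℝ, x + t • v₃ ∈ ℓ₃)

/-!
Polynomial method. If `|J| < (m + 1)³`, some nonzero polynomial of degree at most `3m` vanishes
on `J`. If every line carried more than `3m` points of `J`, such a polynomial would vanish on every
line, hence its gradient would vanish at every joint (three independent directions), so its
partial derivatives would be vanishing polynomials of smaller degree; by induction on the degree
it would be constant, hence zero. So some line carries at most `3m` joints; deleting it and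
inducting on the lines gives `|J| ≤ 3m|L|`, and choosing `m³ ≤ |J|` yields `|J|² ≤ 27|L|³`.
-/

open Finset Module Matrix

theorem Matrix.eq_zero_of_forall_dotProduct_eq_zero {K n ι : Type*} [CommSemiring K] [Fintype n]
    {v : ι → n → K} (hv : Submodule.span K (Set.range v) = ⊤) {w : n → K}
    (h : ∀ i, v i ⬝ᵥ w = 0) : w = 0 := by
  have hf : (dotProductBilin K K).flip w = 0 :=
    LinearMap.ext_on_range hv fun i => by simpa using h i
  exact dotProduct_eq_zero w fun u => by simpa [dotProduct_comm] using LinearMap.congr_fun hf u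

theorem Nat.exists_pow_three_le_lt (n : ℕ) : ∃ m, m ^ 3 ≤ n ∧ n < (m + 1) ^ 3 := by
  have hex : ∃ m, n < (m + 1) ^ 3 :=
    ⟨n, (Nat.lt_succ_self n).trans_le (Nat.le_self_pow three_ne_zero _)⟩
  refine ⟨Nat.find hex, ?_, Nat.find_spec hex⟩
  rcases Nat.eq_zero_or_pos (Nat.find hex) with h | h
  · simp [h]
  · simpa [Nat.sub_add_cancel h] using Nat.find_min hex (Nat.sub_one_lt h.ne')

namespace MvPolynomial

variable {R σ : Type*}

theorem totalDegree_pderiv_lt [CommSemiring R] {p : MvPolynomial σ R} {i : σ}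
    (h : pderiv i p ≠ 0) : (pderiv i p).totalDegree < p.totalDegree := by
  obtain ⟨m, hm, hdeg⟩ :=
    Finset.exists_mem_eq_sup _ (support_nonempty.mpr h) fun s => s.sum fun _ e => e
  have hcoeff : coeff (m + Finsupp.single i 1) p ≠ 0 := by
    intro h0
    rw [mem_support_iff, coeff_pderiv, h0, zero_mul] at hm
    exact hm rfl
  calc (pderiv i p).totalDegree = m.sum fun _ e => e := hdeg
    _ < (m + Finsupp.single i 1).sum fun _ e => e := by
      rw [Finsupp.sum_add_index' (fun _ => rfl) fun _ _ _ => rfl]; simp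
    _ ≤ p.totalDegree := le_totalDegree (mem_support_iff.mpr hcoeff)

theorem eq_C_of_forall_pderiv_eq_zero [CommRing R] [IsDomain R] [CharZero R]
    {p : MvPolynomial σ R} (h : ∀ i, pderiv i p = 0) : p = C (coeff 0 p) := by
  classical
  ext m
  rw [coeff_C]
  split_ifs with hm
  · rw [hm]
  obtain ⟨i, hi⟩ : ∃ i, m i ≠ 0 := by
    by_contra! hzero
    exact hm (Finsupp.ext hzero).symm
  have hsplit : m - Finsupp.single i 1 + Finsupp.single i 1 = m :=
    tsub_add_cancel_of_le (Finsupp.single_le_iff.mpr (Nat.one_le_iff_ne_zero.mpr hi))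
  have := coeff_pderiv (i := i) p (m - Finsupp.single i 1)
  rw [h i, coeff_zero, hsplit, eq_comm, mul_eq_zero] at this
  exact this.resolve_right (Nat.cast_add_one_ne_zero _)

theorem exists_mem_ne_zero_forall_eval_eq_zero [Field R] (V : Submodule R (MvPolynomial σ R))
    [FiniteDimensional R V] (S : Finset (σ → R)) (h : #S < finrank R V) :
    ∃ p ∈ V, p ≠ 0 ∧ ∀ x ∈ S, eval x p = 0 := by
  let evalOn : V →ₗ[R] S → R :=
    LinearMap.pi (fun x : S => (aeval (x : σ → R)).toLinearMap) ∘ₗ V.subtype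
  obtain ⟨q, hq, hq0⟩ := Submodule.exists_mem_ne_zero_of_ne_bot
    (LinearMap.ker_ne_bot_of_finrank_lt (f := evalOn) (by simpa using h))
  refine ⟨q, q.2, by simpa using hq0, fun x hx => ?_⟩
  simpa [evalOn] using congrFun hq ⟨x, hx⟩

theorem exists_totalDegree_le_forall_eval_eq_zero [Field R] [Fintype σ] (S : Finset (σ → R))
    {m : ℕ} (h : #S < (m + 1) ^ Fintype.card σ) :
    ∃ p : MvPolynomial σ R, p ≠ 0 ∧ p.totalDegree ≤ Fintype.card σ * m ∧
      ∀ x ∈ S, eval x p = 0 := by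
  classical
  let e : (σ → Fin (m + 1)) → σ →₀ ℕ := fun e => Finsupp.equivFunOnFinite.symm fun i => e i
  have he : Function.Injective e :=
    Finsupp.equivFunOnFinite.symm.injective.comp Fin.val_injective.comp_left
  let V := Submodule.span R (Set.range fun k => monomial (e k) (1 : R))
  have : FiniteDimensional R V := .span_of_finite R (Set.finite_range _)
  have hV : finrank R V = (m + 1) ^ Fintype.card σ :=
    (finrank_span_eq_card ((basisMonomials σ R).linearIndependent.comp e he)).trans (by simp)
  obtain ⟨p, hpV, hp0, hpS⟩ := exists_mem_ne_zero_forall_eval_eq_zero V S (hV ▸ h)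
  refine ⟨p, hp0, ?_, hpS⟩
  suffices V ≤ restrictTotalDegree σ R (Fintype.card σ * m) from
    (mem_restrictTotalDegree _ _ _).mp (this hpV)
  refine Submodule.span_le.mpr ?_
  rintro _ ⟨k, rfl⟩
  refine (mem_restrictTotalDegree _ _ _).mpr ((totalDegree_monomial_le _ _).trans ?_)
  rw [Finsupp.sum_fintype _ _ fun _ => rfl]
  calc ∑ i, e k i ≤ ∑ _i : σ, m := sum_le_sum fun i _ => Nat.lt_succ_iff.mp (k i).isLt
    _ = Fintype.card σ * m := by simp

open Polynomial in
noncomputable def restrictLine [CommSemiring R] (a v : σ → R) : MvPolynomial σ R →ₐ[R] R[X] :=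
  aeval fun i => Polynomial.C (v i) * Polynomial.X + Polynomial.C (a i)

section restrictLine

open Polynomial (derivative)

variable [CommSemiring R] (a v : σ → R) (p : MvPolynomial σ R)

@[simp]
theorem restrictLine_X (i : σ) :
    restrictLine a v (X i) = Polynomial.C (v i) * Polynomial.X + Polynomial.C (a i) :=
  aeval_X _ i

theorem eval_restrictLine (t : R) : (restrictLine a v p).eval t = eval (a + t • v) p := by
  induction p using MvPolynomial.induction_on with
  | C c => simp [restrictLine]
  | add p q hp hq => simp [hp, hq]
  | mul_X p i hp => simp [hp, mul_comm t, add_comm]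

theorem natDegree_restrictLine_le : (restrictLine a v p).natDegree ≤ p.totalDegree :=
  (aeval_natDegree_le p le_rfl _ fun _ => Polynomial.natDegree_linear_le).trans_eq (mul_one _)

theorem derivative_restrictLine [Fintype σ] :
    derivative (restrictLine a v p) = ∑ i, Polynomial.C (v i) * restrictLine a v (pderiv i p) := by
  classical
  induction p using MvPolynomial.induction_on with
  | C c => simp [restrictLine]
  | add p q hp hq => simp [hp, hq, Finset.sum_add_distrib, mul_add]
  | mul_X p i hp =>
    simp only [map_mul, Polynomial.derivative_mul, hp, pderiv_mul, pderiv_X, Pi.single_apply,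
      restrictLine_X, map_add, mul_add, Finset.sum_add_distrib, apply_ite (restrictLine a v),
      map_zero, map_one, mul_ite, mul_zero, Finset.sum_ite_eq, Finset.mem_univ, if_true,
      Polynomial.derivative_C, Polynomial.derivative_X, Finset.sum_mul, mul_assoc]
    ring

end restrictLine

variable [CommRing R] [IsDomain R] {a v : σ → R} {p : MvPolynomial σ R}

theorem eval_add_smul_eq_zero_of_totalDegree_lt {T : Finset R}
    (hT : ∀ t ∈ T, eval (a + t • v) p = 0) (hcard : p.totalDegree < #T) (t : R) :
    eval (a + t • v) p = 0 := by
  have : restrictLine a v p = 0 :=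
    Polynomial.eq_zero_of_natDegree_lt_card_of_eval_eq_zero' _ T
      (fun t ht => (eval_restrictLine a v p t).trans (hT t ht))
      ((natDegree_restrictLine_le a v p).trans_lt hcard)
  rw [← eval_restrictLine, this, Polynomial.eval_zero]

theorem sum_mul_eval_pderiv_eq_zero [Infinite R] [Fintype σ]
    (h : ∀ t : R, eval (a + t • v) p = 0) : ∑ i, v i * eval a (pderiv i p) = 0 := by
  have hzero : restrictLine a v p = 0 :=
    Polynomial.funext fun t => by simp [eval_restrictLine, h]
  simpa [derivative_restrictLine, Polynomial.eval_finsetSum, eval_restrictLine] using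
    congrArg (Polynomial.eval 0 ∘ Polynomial.derivative) hzero

end MvPolynomial

open scoped Classical in
theorem IsLine.eval_eq_zero_of_totalDegree_lt {ℓ : Set (Fin 3 → ℝ)} (hℓ : IsLine ℓ)
    {p : MvPolynomial (Fin 3) ℝ} {S : Finset (Fin 3 → ℝ)} (hS : ∀ x ∈ S, eval x p = 0)
    (hcard : p.totalDegree < #{x ∈ S | x ∈ ℓ}) : ∀ y ∈ ℓ, eval y p = 0 := by
  obtain ⟨a, v, hv, rfl⟩ := hℓ
  have hinj : Function.Injective fun t : ℝ => a + t • v :=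
    (add_right_injective a).comp (smul_left_injective ℝ hv)
  rintro _ ⟨t, rfl⟩
  refine eval_add_smul_eq_zero_of_totalDegree_lt (T := S.preimage _ hinj.injOn)
    (fun t ht => hS _ (by simpa using ht)) ?_ t
  rw [card_preimage]
  convert hcard using 3
  simp [eq_comm]

theorem IsJoint.eval_pderiv_eq_zero {L : Finset (Set (Fin 3 → ℝ))} {x : Fin 3 → ℝ}
    (hx : IsJoint L x) {p : MvPolynomial (Fin 3) ℝ} (hp : ∀ ℓ ∈ L, ∀ y ∈ ℓ, eval y p = 0)
    (i : Fin 3) : eval x (pderiv i p) = 0 := by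
  obtain ⟨ℓ₁, h₁, ℓ₂, h₂, ℓ₃, h₃, v₁, v₂, v₃, hli, hx₁, hx₂, hx₃⟩ := hx
  have hspan := hli.span_eq_top_of_card_eq_finrank (by simp)
  refine congrFun (eq_zero_of_forall_dotProduct_eq_zero (w := fun j => eval x (pderiv j p))
    hspan fun k => ?_) i
  fin_cases k
  · exact sum_mul_eval_pderiv_eq_zero fun t => hp _ h₁ _ (hx₁ t)
  · exact sum_mul_eval_pderiv_eq_zero fun t => hp _ h₂ _ (hx₂ t)
  · exact sum_mul_eval_pderiv_eq_zero fun t => hp _ h₃ _ (hx₃ t)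

theorem IsJoint.erase {L : Finset (Set (Fin 3 → ℝ))} {x : Fin 3 → ℝ} (hx : IsJoint L x)
    {ℓ : Set (Fin 3 → ℝ)} (hxℓ : x ∉ ℓ) : IsJoint (L.erase ℓ) x := by
  obtain ⟨ℓ₁, h₁, ℓ₂, h₂, ℓ₃, h₃, v₁, v₂, v₃, hli, hx₁, hx₂, hx₃⟩ := hx
  have hne {ℓ' v} (hv : ∀ t : ℝ, x + t • v ∈ ℓ') : ℓ' ≠ ℓ := by
    rintro rfl
    exact hxℓ (by simpa using hv 0)
  exact ⟨ℓ₁, mem_erase.mpr ⟨hne hx₁, h₁⟩, ℓ₂, mem_erase.mpr ⟨hne hx₂, h₂⟩,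
    ℓ₃, mem_erase.mpr ⟨hne hx₃, h₃⟩, v₁, v₂, v₃, hli, hx₁, hx₂, hx₃⟩

section Joints

variable {L : Finset (Set (Fin 3 → ℝ))} {J : Finset (Fin 3 → ℝ)}

open scoped Classical in
theorem eq_zero_of_forall_lt_card_joints (hL : ∀ ℓ ∈ L, IsLine ℓ) (hJ : ∀ x ∈ J, IsJoint L x)
    (hJne : J.Nonempty) {d : ℕ} (hrich : ∀ ℓ ∈ L, d < #{x ∈ J | x ∈ ℓ})
    (p : MvPolynomial (Fin 3) ℝ) (hpd : p.totalDegree ≤ d) (hpJ : ∀ x ∈ J, eval x p = 0) :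
    p = 0 := by
  induction h : p.totalDegree using Nat.strong_induction_on generalizing p with
  | _ n ih =>
    have hline : ∀ ℓ ∈ L, ∀ y ∈ ℓ, eval y p = 0 := fun ℓ hℓ =>
      (hL ℓ hℓ).eval_eq_zero_of_totalDegree_lt hpJ (hpd.trans_lt (hrich ℓ hℓ))
    have hpderiv : ∀ i, pderiv i p = 0 := by
      intro i
      by_contra hi
      have hlt := totalDegree_pderiv_lt hi
      exact hi (ih _ (h ▸ hlt) _ (hlt.le.trans hpd)
        (fun x hx => (hJ x hx).eval_pderiv_eq_zero hline i) rfl)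
    obtain ⟨x, hx⟩ := hJne
    rw [eq_C_of_forall_pderiv_eq_zero hpderiv] at hpJ ⊢
    simpa using hpJ x hx

open scoped Classical in
theorem exists_mem_card_joints_le (hL : ∀ ℓ ∈ L, IsLine ℓ) (hJ : ∀ x ∈ J, IsJoint L x)
    (hJne : J.Nonempty) {m : ℕ} (hm : #J < (m + 1) ^ 3) :
    ∃ ℓ ∈ L, #{x ∈ J | x ∈ ℓ} ≤ 3 * m := by
  obtain ⟨p, hp0, hpd, hpJ⟩ :=
    exists_totalDegree_le_forall_eval_eq_zero J (m := m) (by simpa using hm)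
  by_contra! hrich
  exact hp0 (eq_zero_of_forall_lt_card_joints hL hJ hJne hrich p (by simpa using hpd) hpJ)

theorem card_joints_le_mul_card (hL : ∀ ℓ ∈ L, IsLine ℓ) (hJ : ∀ x ∈ J, IsJoint L x) {m : ℕ}
    (hm : #J < (m + 1) ^ 3) : #J ≤ 3 * m * #L := by
  classical
  induction L using Finset.strongInduction generalizing J with
  | H L ih =>
    rcases J.eq_empty_or_nonempty with rfl | hJne
    · simp
    obtain ⟨ℓ, hℓ, hfew⟩ := exists_mem_card_joints_le hL hJ hJne hm
    have hrest : #{x ∈ J | x ∉ ℓ} ≤ 3 * m * #(L.erase ℓ) :=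
      ih _ (erase_ssubset hℓ) (fun ℓ' h => hL ℓ' (mem_of_mem_erase h))
        (fun x hx => (hJ x (mem_filter.mp hx).1).erase (mem_filter.mp hx).2)
        ((card_filter_le _ _).trans_lt hm)
    calc #J = #{x ∈ J | x ∈ ℓ} + #{x ∈ J | x ∉ ℓ} := (card_filter_add_card_filter_not _).symm
      _ ≤ 3 * m + 3 * m * #(L.erase ℓ) := add_le_add hfew hrest
      _ = 3 * m * #L := by rw [← card_erase_add_one hℓ]; ring

end Joints

theorem sq_le_of_pow_three_le_of_le_mul {j m n : ℕ} (hm : m ^ 3 ≤ j) (hj : j ≤ 3 * m * n) :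
    j ^ 2 ≤ 27 * n ^ 3 := by
  rcases j.eq_zero_or_pos with rfl | hj0
  · simp
  refine Nat.le_of_mul_le_mul_left ?_ hj0
  calc j * j ^ 2 = j ^ 3 := by ring
    _ ≤ (3 * m * n) ^ 3 := Nat.pow_le_pow_left hj 3
    _ = 27 * m ^ 3 * n ^ 3 := by ring
    _ ≤ 27 * j * n ^ 3 := by gcongr
    _ = j * (27 * n ^ 3) := by ring

theorem le_six_mul_rpow_of_sq_le {j n : ℕ} (h : j ^ 2 ≤ 27 * n ^ 3) :
    (j : ℝ) ≤ 6 * (n : ℝ) ^ ((3 : ℝ) / 2) := by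
  have hpow : ((n : ℝ) ^ ((3 : ℝ) / 2)) ^ 2 = (n : ℝ) ^ 3 := by
    rw [← Real.rpow_mul_natCast (by positivity)]
    norm_num
  rw [← pow_le_pow_iff_left₀ (by positivity) (by positivity) two_ne_zero, mul_pow, hpow]
  have : ((j ^ 2 : ℕ) : ℝ) ≤ 27 * n ^ 3 := by exact_mod_cast h
  push_cast at this
  linarith [pow_nonneg (Nat.cast_nonneg (α := ℝ) n) 3]

/-- **The joints theorem.** Any `N` lines in `ℝ³` form at most `O(N^{3/2})` joints. -/
theorem joints_theorem :
    ∃ C : ℝ, 0 < C ∧ ∀ (L : Finset (Set (Fin 3 → ℝ))), (∀ ℓ ∈ L, IsLine ℓ) →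
      ∀ (J : Finset (Fin 3 → ℝ)), (∀ x ∈ J, IsJoint L x) →
        (J.card : ℝ) ≤ C * (L.card : ℝ) ^ ((3 : ℝ) / 2) := by
  refine ⟨6, by norm_num, fun L hL J hJ => ?_⟩
  obtain ⟨m, hmJ, hJm⟩ := Nat.exists_pow_three_le_lt #J
  exact le_six_mul_rpow_of_sq_le
    (sq_le_of_pow_three_le_of_le_mul hmJ (card_joints_le_mul_card hL hJ hJm))
end
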